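/- Every tournament on 9 vertices is 3-colorable, i.e., its vertex set can be partitioned into 3 acyclic sets. -/

import Mathlib

/-- A set `A` of vertices of a digraph (given by its arc relation `Adj`) is *acyclic*
if the subdigraph induced on `A` contains no directed cycle; equivalently, no vertex of `A`
lies on a closed directed walk all of whose vertices are in `A`. -/
def AcyclicSet {V : Type*} (Adj : V → V → Prop) (A : Set V) : Prop :=
  ∀ v ∈ A, ¬ Relation.TransGen (fun x y => x ∈ A ∧ y ∈ A ∧ Adj x y) v v

/-- A digraph is `k`-colorable if its vertex set can be partitioned into `k` acyclic sets. -/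
def DiColorable {V : Type*} (Adj : V → V → Prop) (k : ℕ) : Prop :=
  ∃ f : V → Fin k, ∀ i : Fin k, AcyclicSet Adj {v | f v = i}

/-- The chromatic number of a digraph: the least `k` admitting a partition of the
vertex set into `k` acyclic sets. -/
noncomputable def dichromNum {V : Type*} (Adj : V → V → Prop) : ℕ :=
  sInf {k | DiColorable Adj k}

/-- A digraph is digon-free if it has no directed cycle of length two. -/
def DigonFree {V : Type*} (Adj : V → V → Prop) : Prop :=
  ∀ u v, Adj u v → ¬ Adj v u

/-- The out-degree of a vertex. -/
noncomputable def outDeg {V : Type*} (Adj : V → V → Prop) (v : V) : ℕ :=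
  Nat.card {u // Adj v u}

/-- The in-degree of a vertex. -/
noncomputable def inDeg {V : Type*} (Adj : V → V → Prop) (v : V) : ℕ :=
  Nat.card {u // Adj u v}

/-- `Δ̃(D)`: the maximum geometric mean of the out-degree and in-degree of a vertex. -/
noncomputable def tildeDelta {V : Type*} [Fintype V] (Adj : V → V → Prop) : ℝ :=
  ⨆ v : V, Real.sqrt ((outDeg Adj v : ℝ) * (inDeg Adj v : ℝ))

/-- The underlying undirected graph of a digraph. -/
def underGraph {V : Type*} (Adj : V → V → Prop) : SimpleGraph V where
  Adj a b := a ≠ b ∧ (Adj a b ∨ Adj b a)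
  symm := ⟨fun _ _ h => ⟨h.1.symm, h.2.symm⟩⟩
  loopless := ⟨fun _ h => h.1 rfl⟩


/-!
Erdős–Moser: in a tournament, every set of `2 ^ k` vertices contains an acyclic set of `k + 1`
vertices. Pick a vertex `v`, recurse into the larger of its out- and in-neighbourhoods, and add
`v` back as a source or a sink. In a tournament on 9 vertices this yields greedily an acyclic set
of size 4, then one of size 3 among the remaining 5 vertices, and the last 2 vertices form a third.
-/

open Finset Relation

variable {V : Type*} {Adj : V → V → Prop}

theorem AcyclicSet.mono {A B : Set V} (hB : AcyclicSet Adj B) (hAB : A ⊆ B) :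
    AcyclicSet Adj A := fun v hv hcyc =>
  hB v (hAB hv) (TransGen.mono (fun _ _ ⟨hx, hy, hxy⟩ => ⟨hAB hx, hAB hy, hxy⟩) _ _ hcyc)

theorem acyclicSet_flip {A : Set V} : AcyclicSet (flip Adj) A ↔ AcyclicSet Adj A := by
  have hswap : (fun x y => x ∈ A ∧ y ∈ A ∧ flip Adj x y) =
      Function.swap (fun x y => x ∈ A ∧ y ∈ A ∧ Adj x y) := by
    funext x y
    exact propext and_left_comm
  simp only [AcyclicSet]
  rw [hswap]
  exact forall₂_congr fun v _ => not_congr transGen_swap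

theorem AcyclicSet.insert_of_source {A : Set V} {v : V} (hA : AcyclicSet Adj A)
    (hv : ∀ a ∈ insert v A, ¬ Adj a v) : AcyclicSet Adj (insert v A) := by
  set R := fun x y => x ∈ insert v A ∧ y ∈ insert v A ∧ Adj x y
  -- No arc enters `v`, so a walk can meet `v` only at its start and a closed walk avoids it.
  have hwalk : ∀ {x y}, TransGen R x y → y ≠ v ∧
      (x ≠ v → TransGen (fun x y => x ∈ A ∧ y ∈ A ∧ Adj x y) x y) := by
    have hne : ∀ {x y}, R x y → y ≠ v := fun ⟨hx, _, hxy⟩ hyv => hv _ hx (hyv ▸ hxy)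
    intro x y hxy
    induction hxy with
    | single hxy =>
      refine ⟨hne hxy, fun hxv => .single ⟨?_, ?_, hxy.2.2⟩⟩
      · exact hxy.1.resolve_left hxv
      · exact hxy.2.1.resolve_left (hne hxy)
    | tail _ hbc ih =>
      refine ⟨hne hbc, fun hxv => (ih.2 hxv).tail ⟨?_, ?_, hbc.2.2⟩⟩
      · exact hbc.1.resolve_left ih.1
      · exact hbc.2.1.resolve_left (hne hbc)
  intro w hw hcyc
  have hwv := (hwalk hcyc).1
  exact hA w (hw.resolve_left hwv) ((hwalk hcyc).2 hwv)

theorem AcyclicSet.insert_of_sink {A : Set V} {v : V} (hA : AcyclicSet Adj A)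
    (hv : ∀ a ∈ insert v A, ¬ Adj v a) : AcyclicSet Adj (insert v A) :=
  acyclicSet_flip.1 ((acyclicSet_flip.2 hA).insert_of_source hv)

theorem DiColorable.of_forall_exists_mem {k : ℕ} (A : Fin k → Set V)
    (hA : ∀ i, AcyclicSet Adj (A i)) (hcover : ∀ v, ∃ i, v ∈ A i) : DiColorable Adj k := by
  choose f hf using hcover
  exact ⟨f, fun i => (hA i).mono fun v hv => hv ▸ hf v⟩

section Tournament

variable [DecidableEq V] [DecidableRel Adj]

theorem card_le_card_filter_add_card_filter_add_one
    (htotal : ∀ u v, u ≠ v → Adj u v ∨ Adj v u) {S : Finset V} {v : V} (hv : v ∈ S) :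
    #S ≤ #{u ∈ S | Adj v u} + #{u ∈ S | Adj u v} + 1 := by
  have hcover : S ⊆ insert v ({u ∈ S | Adj v u} ∪ {u ∈ S | Adj u v}) := by
    intro u hu
    rcases eq_or_ne u v with rfl | huv
    · exact mem_insert_self _ _
    · rcases htotal v u huv.symm with h | h <;> simp [hu, h]
  calc #S ≤ #(insert v ({u ∈ S | Adj v u} ∪ {u ∈ S | Adj u v})) := card_le_card hcover
    _ ≤ #({u ∈ S | Adj v u} ∪ {u ∈ S | Adj u v}) + 1 := card_insert_le _ _
    _ ≤ #{u ∈ S | Adj v u} + #{u ∈ S | Adj u v} + 1 := by grw [card_union_le]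

theorem exists_acyclicSet_card_eq_of_two_pow_le (hasym : DigonFree Adj)
    (htotal : ∀ u v, u ≠ v → Adj u v ∨ Adj v u) (k : ℕ) {S : Finset V} (hS : 2 ^ k ≤ #S) :
    ∃ T ⊆ S, #T = k + 1 ∧ AcyclicSet Adj (T : Set V) := by
  have hirrefl : ∀ v, ¬ Adj v v := fun v h => hasym v v h h
  induction k generalizing S with
  | zero =>
    obtain ⟨v, hv⟩ := card_pos.mp (by simpa using hS)
    refine ⟨{v}, singleton_subset_iff.mpr hv, card_singleton v, ?_⟩
    simpa using AcyclicSet.insert_of_source (A := ∅) (fun _ h => h.elim) (by simpa using hirrefl v)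
  | succ k ih =>
    obtain ⟨v, hv⟩ := card_pos.mp (lt_of_lt_of_le (by positivity) hS)
    have hsplit := card_le_card_filter_add_card_filter_add_one htotal hv
    have hsize : 2 ^ k ≤ #{u ∈ S | Adj v u} ∨ 2 ^ k ≤ #{u ∈ S | Adj u v} := by
      rw [pow_succ] at hS
      omega
    rcases hsize with hout | hin
    · obtain ⟨T, hTS, hcard, hT⟩ := ih hout
      have hvT : v ∉ T := fun h => hirrefl v (mem_filter.mp (hTS h)).2
      refine ⟨insert v T, insert_subset hv (hTS.trans (filter_subset _ _)),
        by rw [card_insert_of_notMem hvT, hcard], ?_⟩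
      rw [coe_insert]
      refine hT.insert_of_source fun a ha hav => ?_
      rcases ha with rfl | ha
      · exact hirrefl a hav
      · exact hasym _ _ hav (mem_filter.mp (hTS ha)).2
    · obtain ⟨T, hTS, hcard, hT⟩ := ih hin
      have hvT : v ∉ T := fun h => hirrefl v (mem_filter.mp (hTS h)).2
      refine ⟨insert v T, insert_subset hv (hTS.trans (filter_subset _ _)),
        by rw [card_insert_of_notMem hvT, hcard], ?_⟩
      rw [coe_insert]
      refine hT.insert_of_sink fun a ha hva => ?_
      rcases ha with rfl | ha
      · exact hirrefl a hva
      · exact hasym _ _ hva (mem_filter.mp (hTS ha)).2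

end Tournament

/-- Every tournament on 9 vertices is 3-colorable: its vertex set can be partitioned into
3 acyclic sets. -/
theorem stmt_16 {V : Type} [Fintype V] (hcard : Fintype.card V = 9)
    (Adj : V → V → Prop)
    (hloopless : ∀ v, ¬ Adj v v)
    (htour : ∀ u v : V, u ≠ v → (Adj u v ↔ ¬ Adj v u)) :
    DiColorable Adj 3 := by
  classical
  have hasym : DigonFree Adj := fun u v huv hvu =>
    (eq_or_ne u v).elim (fun h => hloopless u (h ▸ huv)) fun h => (htour u v h).mp huv hvu
  have htotal : ∀ u v, u ≠ v → Adj u v ∨ Adj v u := fun u v h =>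
    or_iff_not_imp_right.mpr (htour u v h).mpr
  have hmoser := exists_acyclicSet_card_eq_of_two_pow_le hasym htotal
  obtain ⟨A, -, hA4, hA⟩ := hmoser 3 (S := univ) (by simp [hcard])
  obtain ⟨B, hBsub, hB3, hB⟩ := hmoser 2 (S := univ \ A) (by simp [card_univ_sdiff, hcard, hA4])
  have hrest : #((univ \ A) \ B) = 2 := by
    rw [card_sdiff_of_subset hBsub, card_univ_sdiff, hcard, hA4, hB3]
  obtain ⟨C, hCsub, hC2, hC⟩ := hmoser 1 (S := (univ \ A) \ B) (by simp [hrest])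
  have hCrest : C = (univ \ A) \ B := eq_of_subset_of_card_le hCsub (by rw [hrest, hC2])
  refine DiColorable.of_forall_exists_mem ![A, B, C] (fun i => by fin_cases i <;> assumption)
    fun v => ?_
  by_cases hvA : v ∈ A
  · exact ⟨0, by simpa using hvA⟩
  by_cases hvB : v ∈ B
  · exact ⟨1, by simpa using hvB⟩
  exact ⟨2, by simp [hCrest, hvA, hvB]⟩
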